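/- Invariance of the classes K_{M₁,M₂} under robustness: for every BB-STL formula φ that does not contain ⊤ and all M₁, M₂ ≥ 0, if x ∈ 𝒮 satisfies ‖x‖_∞ ≤ M₁ and ‖x(·−τ) − x‖_∞ ≤ M₂ τ for all τ ≥ 0, then the robustness signal y := ρ_φ(x) is real-valued and satisfies ‖y‖_∞ ≤ M₁ and |y(t) − y(s)| ≤ M₂ |t − s| for all t, s ∈ ℝ (equivalently, y ∈ K_{M₁,M₂}). -/

import Mathlib

open MeasureTheory

/-- The space of signals: infinitely differentiable real functions with compact support. -/
def Signal (x : ℝ → ℝ) : Prop := ContDiff ℝ (⊤ : ℕ∞) x ∧ HasCompactSupport x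

/-- The space of measurement kernels: nonzero integrable functions with L¹ norm at most 1. -/
def Kernel (f : ℝ → ℝ) : Prop :=
  f ≠ 0 ∧ MeasureTheory.Integrable f ∧ (∫ t, |f t|) ≤ 1

/-- d(x,y) = sup { ∫ (x(τ) − y(τ)) f(τ) dτ : f ∈ ℱ }. -/
noncomputable def dS (x y : ℝ → ℝ) : ℝ :=
  sSup {r : ℝ | ∃ f, Kernel f ∧ r = ∫ τ, (x τ - y τ) * f τ}

/-- The measurement ⟨f(·−t), x⟩ = ∫ f(τ−t) x(τ) dτ. -/
noncomputable def meas (f x : ℝ → ℝ) (t : ℝ) : ℝ := ∫ τ, f (τ - t) * x τ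
/-- BB-STL formulas: φ ::= ⊤ | p_f (f ∈ ℱ) | ¬φ | φ₁ ∨ φ₂ | Once_[a,b] φ | Hist_[a,b] φ |
φ₁ Since_[a,b] φ₂, with [a,b] a compact interval of ℝ. -/
inductive BBSTL where
  | top : BBSTL
  | atom : {f : ℝ → ℝ // Kernel f} → BBSTL
  | neg : BBSTL → BBSTL
  | or : BBSTL → BBSTL → BBSTL
  | once : ℝ → ℝ → BBSTL → BBSTL
  | hist : ℝ → ℝ → BBSTL → BBSTL
  | since : ℝ → ℝ → BBSTL → BBSTL → BBSTL

/-- Real-valued robust semantics of BB-STL (for formulas not containing ⊤; the value on ⊤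
is irrelevant and set to 0). Sups and infs over intervals are taken in ℝ. -/
noncomputable def robR (x : ℝ → ℝ) : BBSTL → ℝ → ℝ
  | .top, _ => 0
  | .atom f, t => meas f.1 x t
  | .neg φ, t => - robR x φ t
  | .or φ ψ, t => max (robR x φ t) (robR x ψ t)
  | .once a b φ, t => sSup (robR x φ '' Set.Icc (t - b) (t - a))
  | .hist a b φ, t => sInf (robR x φ '' Set.Icc (t - b) (t - a))
  | .since a b φ ψ, t => sSup ((fun t' =>
      min (robR x ψ t') (sInf (robR x φ '' Set.Ioc t' t))) '' Set.Icc (t - b) (t - a))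


/-- Membership in the class K_{M₁,M₂}: bounded continuous functions u with ‖u‖_∞ ≤ M₁ and
‖u(·−τ) − u‖_∞ ≤ M₂ τ for all τ ≥ 0. -/
def MemK (M₁ M₂ : ℝ) (u : ℝ → ℝ) : Prop :=
  Continuous u ∧ (∀ t, |u t| ≤ M₁) ∧ ∀ τ ≥ (0:ℝ), ∀ t, |u (t - τ) - u t| ≤ M₂ * τ

/-- A BB-STL formula does not contain ⊤. -/
def NoTop : BBSTL → Prop
  | .top => False
  | .atom _ => True
  | .neg φ => NoTop φ
  | .or φ ψ => NoTop φ ∧ NoTop ψ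
  | .once _ _ φ => NoTop φ
  | .hist _ _ φ => NoTop φ
  | .since _ _ φ ψ => NoTop φ ∧ NoTop ψ


section Aux

lemma abs_sSup_le' {M : ℝ} (hM : 0 ≤ M) {A : Set ℝ} (h : ∀ a ∈ A, |a| ≤ M) :
    |sSup A| ≤ M := by
  rcases A.eq_empty_or_nonempty with rfl | ⟨a, ha⟩
  · simpa [Real.sSup_empty] using hM
  · have hub : sSup A ≤ M := Real.sSup_le (fun y hy => (abs_le.1 (h y hy)).2) hM
    have hbdd : BddAbove A := ⟨M, fun y hy => (abs_le.1 (h y hy)).2⟩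
    have hlb : -M ≤ sSup A := le_trans (abs_le.1 (h a ha)).1 (le_csSup hbdd ha)
    exact abs_le.2 ⟨hlb, hub⟩

lemma abs_sInf_le' {M : ℝ} (hM : 0 ≤ M) {A : Set ℝ} (h : ∀ a ∈ A, |a| ≤ M) :
    |sInf A| ≤ M := by
  rcases A.eq_empty_or_nonempty with rfl | ⟨a, ha⟩
  · simpa [Real.sInf_empty] using hM
  · have hbdd : BddBelow A := ⟨-M, fun y hy => (abs_le.1 (h y hy)).1⟩
    have hlb : -M ≤ sInf A := le_csInf ⟨a, ha⟩ (fun y hy => (abs_le.1 (h y hy)).1)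
    have hub : sInf A ≤ M := le_trans (csInf_le hbdd ha) (abs_le.1 (h a ha)).2
    exact abs_le.2 ⟨hlb, hub⟩

lemma sSup_close {ε M : ℝ} (hε : 0 ≤ ε) {A B : Set ℝ}
    (hA : ∀ a ∈ A, |a| ≤ M) (hB : ∀ b ∈ B, |b| ≤ M)
    (hne : A.Nonempty ↔ B.Nonempty)
    (h1 : ∀ a ∈ A, ∃ b ∈ B, a ≤ b + ε) (h2 : ∀ b ∈ B, ∃ a ∈ A, b ≤ a + ε) :
    |sSup A - sSup B| ≤ ε := by
  rcases A.eq_empty_or_nonempty with rfl | hAne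
  · have : B = ∅ := Set.not_nonempty_iff_eq_empty.1 (fun h => (hne.2 h).elim (by simp))
    simpa [this, Real.sSup_empty] using hε
  · have hBne : B.Nonempty := hne.1 hAne
    have hbA : BddAbove A := ⟨M, fun y hy => (abs_le.1 (hA y hy)).2⟩
    have hbB : BddAbove B := ⟨M, fun y hy => (abs_le.1 (hB y hy)).2⟩
    have d1 : sSup A ≤ sSup B + ε := by
      refine csSup_le hAne (fun a ha => ?_)
      obtain ⟨b, hb, hab⟩ := h1 a ha
      exact hab.trans (by linarith [le_csSup hbB hb])
    have d2 : sSup B ≤ sSup A + ε := by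
      refine csSup_le hBne (fun b hb => ?_)
      obtain ⟨a, ha, hba⟩ := h2 b hb
      exact hba.trans (by linarith [le_csSup hbA ha])
    exact abs_le.2 ⟨by linarith, by linarith⟩

lemma sInf_close {ε M : ℝ} (hε : 0 ≤ ε) {A B : Set ℝ}
    (hA : ∀ a ∈ A, |a| ≤ M) (hB : ∀ b ∈ B, |b| ≤ M)
    (hne : A.Nonempty ↔ B.Nonempty)
    (h1 : ∀ a ∈ A, ∃ b ∈ B, b ≤ a + ε) (h2 : ∀ b ∈ B, ∃ a ∈ A, a ≤ b + ε) :
    |sInf A - sInf B| ≤ ε := by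
  rcases A.eq_empty_or_nonempty with rfl | hAne
  · have : B = ∅ := Set.not_nonempty_iff_eq_empty.1 (fun h => (hne.2 h).elim (by simp))
    simpa [this, Real.sInf_empty] using hε
  · have hBne : B.Nonempty := hne.1 hAne
    have hbA : BddBelow A := ⟨-M, fun y hy => (abs_le.1 (hA y hy)).1⟩
    have hbB : BddBelow B := ⟨-M, fun y hy => (abs_le.1 (hB y hy)).1⟩
    have d1 : sInf B ≤ sInf A + ε := by
      have : sInf B - ε ≤ sInf A := by
        refine le_csInf hAne (fun a ha => ?_)
        obtain ⟨b, hb, hba⟩ := h1 a ha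
        linarith [csInf_le hbB hb]
      linarith
    have d2 : sInf A ≤ sInf B + ε := by
      have : sInf A - ε ≤ sInf B := by
        refine le_csInf hBne (fun b hb => ?_)
        obtain ⟨a, ha, hab⟩ := h2 b hb
        linarith [csInf_le hbA ha]
      linarith
    exact abs_le.2 ⟨by linarith, by linarith⟩

end Aux

/-- Invariance of the classes K_{M₁,M₂} under robustness: for a BB-STL formula φ without ⊤
and a signal x ∈ 𝒮 ∩ K_{M₁,M₂}, the robustness signal y = ρ_φ(x) is real-valued with
‖y‖_∞ ≤ M₁ and |y(t) − y(s)| ≤ M₂|t−s| for all t, s (so y ∈ K_{M₁,M₂}). -/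
theorem robR_preserves_K (φ : BBSTL) (hφ : NoTop φ) (M₁ M₂ : ℝ)
    (hM₁ : 0 ≤ M₁) (hM₂ : 0 ≤ M₂) (x : ℝ → ℝ) (hx : Signal x)
    (hxb : ∀ t, |x t| ≤ M₁)
    (hxs : ∀ τ ≥ (0:ℝ), ∀ t, |x (t - τ) - x t| ≤ M₂ * τ) :
    (∀ t, |robR x φ t| ≤ M₁) ∧
    (∀ t s : ℝ, |robR x φ t - robR x φ s| ≤ M₂ * |t - s|) ∧
    MemK M₁ M₂ (robR x φ) := by
  have hxc : Continuous x := hx.1.continuous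
  -- Lipschitz property of x
  have hlipx : ∀ a b : ℝ, |x a - x b| ≤ M₂ * |a - b| := by
    intro a b
    rcases le_total a b with h | h
    · have h1 := hxs (b - a) (by linarith) b
      have e : b - (b - a) = a := by ring
      rw [e] at h1
      calc |x a - x b| ≤ M₂ * (b - a) := h1
        _ = M₂ * |a - b| := by rw [abs_of_nonpos (by linarith : a - b ≤ 0)]; ring
    · have h1 := hxs (a - b) (by linarith) a
      have e : a - (a - b) = b := by ring
      rw [e] at h1
      calc |x a - x b| = |x b - x a| := abs_sub_comm _ _
        _ ≤ M₂ * (a - b) := h1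
        _ = M₂ * |a - b| := by rw [abs_of_nonneg (by linarith : (0:ℝ) ≤ a - b)]
  have main : ∀ ψ, NoTop ψ → (∀ t, |robR x ψ t| ≤ M₁) ∧
      (∀ t s : ℝ, |robR x ψ t - robR x ψ s| ≤ M₂ * |t - s|) := by
    intro ψ
    induction ψ with
    | top => exact fun h => h.elim
    | atom f =>
      intro _
      obtain ⟨-, hfi, hfn⟩ := f.2
      -- integrability of σ ↦ f σ * x (σ + t)
      have hint : ∀ t : ℝ, Integrable (fun σ => f.1 σ * x (σ + t)) := by
        intro t
        have := hfi.bdd_mul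
          ((hxc.comp (continuous_id.add continuous_const)).aestronglyMeasurable)
          (c := M₁) (Filter.Eventually.of_forall fun σ => by simpa [Real.norm_eq_abs] using hxb (σ + t))
        simpa [mul_comm] using this
      have hrw : ∀ t : ℝ, robR x (.atom f) t = ∫ σ, f.1 σ * x (σ + t) := by
        intro t
        have := integral_add_right_eq_self (μ := (volume : Measure ℝ))
          (fun τ => f.1 (τ - t) * x τ) t
        simp only [add_sub_cancel_right] at this
        rw [robR, meas, ← this]
      have hfnn : (0:ℝ) ≤ ∫ τ, |f.1 τ| := integral_nonneg (fun τ => abs_nonneg _)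
      constructor
      · intro t
        rw [hrw t]
        calc |∫ σ, f.1 σ * x (σ + t)| ≤ ∫ σ, |f.1 σ * x (σ + t)| := by
              simpa only [Real.norm_eq_abs] using norm_integral_le_integral_norm (fun σ => f.1 σ * x (σ + t))
          _ ≤ ∫ σ, |f.1 σ| * M₁ := by
              refine integral_mono (hint t).abs (hfi.abs.mul_const M₁) (fun σ => ?_)
              rw [abs_mul]
              exact mul_le_mul_of_nonneg_left (hxb (σ + t)) (abs_nonneg _)
          _ = (∫ σ, |f.1 σ|) * M₁ := integral_mul_const M₁ _
          _ ≤ 1 * M₁ := mul_le_mul_of_nonneg_right hfn hM₁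
          _ = M₁ := one_mul M₁
      · intro t s
        rw [hrw t, hrw s, ← integral_sub (hint t) (hint s)]
        have key : ∀ σ : ℝ, |f.1 σ * x (σ + t) - f.1 σ * x (σ + s)| ≤ |f.1 σ| * (M₂ * |t - s|) := by
          intro σ
          have : f.1 σ * x (σ + t) - f.1 σ * x (σ + s) = f.1 σ * (x (σ + t) - x (σ + s)) := by ring
          rw [this, abs_mul]
          refine mul_le_mul_of_nonneg_left ?_ (abs_nonneg _)
          have := hlipx (σ + t) (σ + s)
          simpa [add_sub_add_left_eq_sub] using this
        calc |∫ σ, (f.1 σ * x (σ + t) - f.1 σ * x (σ + s))|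
            ≤ ∫ σ, |f.1 σ * x (σ + t) - f.1 σ * x (σ + s)| := by
              simpa only [Real.norm_eq_abs] using norm_integral_le_integral_norm
                (fun σ => f.1 σ * x (σ + t) - f.1 σ * x (σ + s))
          _ ≤ ∫ σ, |f.1 σ| * (M₂ * |t - s|) := by
              exact integral_mono ((hint t).sub (hint s)).abs
                (hfi.abs.mul_const _) key
          _ = (∫ σ, |f.1 σ|) * (M₂ * |t - s|) := integral_mul_const _ _
          _ ≤ 1 * (M₂ * |t - s|) := mul_le_mul_of_nonneg_right hfn (by positivity)
          _ = M₂ * |t - s| := one_mul _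
    | neg φ ih =>
      intro h
      obtain ⟨hb, hl⟩ := ih h
      refine ⟨fun t => by simpa [robR, abs_neg] using hb t, fun t s => ?_⟩
      simp only [robR]
      have e : -robR x φ t - -robR x φ s = -(robR x φ t - robR x φ s) := by ring
      rw [e, abs_neg]
      exact hl t s
    | or φ ψ ihφ ihψ =>
      intro h
      obtain ⟨hbφ, hlφ⟩ := ihφ h.1
      obtain ⟨hbψ, hlψ⟩ := ihψ h.2
      constructor
      · intro t
        have h1 := hbφ t; have h2 := hbψ t
        rw [robR]
        exact abs_le.2 ⟨le_max_of_le_left (abs_le.1 h1).1,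
          max_le (abs_le.1 h1).2 (abs_le.1 h2).2⟩
      · intro t s
        rw [robR, robR]
        calc |max (robR x φ t) (robR x ψ t) - max (robR x φ s) (robR x ψ s)|
            ≤ max |robR x φ t - robR x φ s| |robR x ψ t - robR x ψ s| :=
              abs_max_sub_max_le_max _ _ _ _
          _ ≤ M₂ * |t - s| := max_le (hlφ t s) (hlψ t s)
    | once a b φ ih =>
      intro h
      obtain ⟨hb, hl⟩ := ih h
      have hbd : ∀ t : ℝ, ∀ r ∈ robR x φ '' Set.Icc (t - b) (t - a), |r| ≤ M₁ := by
        rintro t r ⟨t', -, rfl⟩; exact hb t'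
      refine ⟨fun t => abs_sSup_le' hM₁ (hbd t), fun t s => ?_⟩
      rw [robR, robR]
      refine sSup_close (by positivity) (hbd t) (hbd s) ?_ ?_ ?_
      · simp only [Set.image_nonempty, Set.nonempty_Icc]
        constructor <;> intro <;> linarith
      · rintro r ⟨t', ht', rfl⟩
        refine ⟨robR x φ (t' - (t - s)), ⟨t' - (t - s), ?_, rfl⟩, ?_⟩
        · simp only [Set.mem_Icc] at ht' ⊢; constructor <;> linarith
        · have h1 := hl t' (t' - (t - s))
          have e : t' - (t' - (t - s)) = t - s := by ring
          rw [e] at h1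
          linarith [(abs_le.1 h1).2]
      · rintro r ⟨t', ht', rfl⟩
        refine ⟨robR x φ (t' + (t - s)), ⟨t' + (t - s), ?_, rfl⟩, ?_⟩
        · simp only [Set.mem_Icc] at ht' ⊢; constructor <;> linarith
        · have h1 := hl t' (t' + (t - s))
          have e : t' - (t' + (t - s)) = -(t - s) := by ring
          rw [e, abs_neg] at h1
          linarith [(abs_le.1 h1).2]
    | hist a b φ ih =>
      intro h
      obtain ⟨hb, hl⟩ := ih h
      have hbd : ∀ t : ℝ, ∀ r ∈ robR x φ '' Set.Icc (t - b) (t - a), |r| ≤ M₁ := by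
        rintro t r ⟨t', -, rfl⟩; exact hb t'
      refine ⟨fun t => abs_sInf_le' hM₁ (hbd t), fun t s => ?_⟩
      rw [robR, robR]
      refine sInf_close (by positivity) (hbd t) (hbd s) ?_ ?_ ?_
      · simp only [Set.image_nonempty, Set.nonempty_Icc]
        constructor <;> intro <;> linarith
      · rintro r ⟨t', ht', rfl⟩
        refine ⟨robR x φ (t' - (t - s)), ⟨t' - (t - s), ?_, rfl⟩, ?_⟩
        · simp only [Set.mem_Icc] at ht' ⊢; constructor <;> linarith
        · have h1 := hl (t' - (t - s)) t'
          have e : t' - (t - s) - t' = -(t - s) := by ring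
          rw [e, abs_neg] at h1
          linarith [(abs_le.1 h1).2]
      · rintro r ⟨t', ht', rfl⟩
        refine ⟨robR x φ (t' + (t - s)), ⟨t' + (t - s), ?_, rfl⟩, ?_⟩
        · simp only [Set.mem_Icc] at ht' ⊢; constructor <;> linarith
        · have h1 := hl (t' + (t - s)) t'
          have e : t' + (t - s) - t' = t - s := by ring
          rw [e] at h1
          linarith [(abs_le.1 h1).2]
    | since a b φ ψ ihφ ihψ =>
      intro h
      obtain ⟨hbφ, hlφ⟩ := ihφ h.1
      obtain ⟨hbψ, hlψ⟩ := ihψ h.2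
      set g : ℝ → ℝ → ℝ := fun t' t =>
        min (robR x ψ t') (sInf (robR x φ '' Set.Ioc t' t)) with hg
      have hinfbd : ∀ t' t : ℝ, |sInf (robR x φ '' Set.Ioc t' t)| ≤ M₁ := by
        intro t' t
        refine abs_sInf_le' hM₁ ?_
        rintro r ⟨u, -, rfl⟩; exact hbφ u
      have hgbd : ∀ t' t : ℝ, |g t' t| ≤ M₁ := by
        intro t' t
        have h1 := hbψ t'; have h2 := hinfbd t' t
        exact abs_le.2 ⟨le_min (abs_le.1 h1).1 (abs_le.1 h2).1,
          (min_le_left _ _).trans (abs_le.1 h1).2⟩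
      -- shift estimate for g
      have hgshift : ∀ (t' t c : ℝ), |g (t' + c) (t + c) - g t' t| ≤ M₂ * |c| := by
        intro t' t c
        have hinf : |sInf (robR x φ '' Set.Ioc (t' + c) (t + c)) -
            sInf (robR x φ '' Set.Ioc t' t)| ≤ M₂ * |c| := by
          refine sInf_close (M := M₁) (by positivity) ?_ ?_ ?_ ?_ ?_
          · rintro r ⟨u, -, rfl⟩; exact hbφ u
          · rintro r ⟨u, -, rfl⟩; exact hbφ u
          · simp only [Set.image_nonempty, Set.nonempty_Ioc]
            constructor <;> intro <;> linarith
          · rintro r ⟨u, hu, rfl⟩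
            refine ⟨robR x φ (u - c), ⟨u - c, ?_, rfl⟩, ?_⟩
            · simp only [Set.mem_Ioc] at hu ⊢; constructor <;> linarith
            · have h1 := hlφ (u - c) u
              have e : u - c - u = -c := by ring
              rw [e, abs_neg] at h1
              linarith [(abs_le.1 h1).2]
          · rintro r ⟨u, hu, rfl⟩
            refine ⟨robR x φ (u + c), ⟨u + c, ?_, rfl⟩, ?_⟩
            · simp only [Set.mem_Ioc] at hu ⊢; constructor <;> linarith
            · have h1 := hlφ (u + c) u
              have e : u + c - u = c := by ring
              rw [e] at h1
              linarith [(abs_le.1 h1).2]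
        have hψs : |robR x ψ (t' + c) - robR x ψ t'| ≤ M₂ * |c| := by
          have h1 := hlψ (t' + c) t'
          have e : t' + c - t' = c := by ring
          rwa [e] at h1
        calc |g (t' + c) (t + c) - g t' t|
            ≤ max |robR x ψ (t' + c) - robR x ψ t'|
                |sInf (robR x φ '' Set.Ioc (t' + c) (t + c)) -
                  sInf (robR x φ '' Set.Ioc t' t)| := abs_min_sub_min_le_max _ _ _ _
          _ ≤ M₂ * |c| := max_le hψs hinf
      have hbd : ∀ t : ℝ, ∀ r ∈ (fun t' => g t' t) '' Set.Icc (t - b) (t - a), |r| ≤ M₁ := by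
        rintro t r ⟨t', -, rfl⟩; exact hgbd t' t
      constructor
      · intro t
        rw [robR]
        exact abs_sSup_le' hM₁ (hbd t)
      · intro t s
        rw [robR, robR]
        refine sSup_close (by positivity) (hbd t) (hbd s) ?_ ?_ ?_
        · simp only [Set.image_nonempty, Set.nonempty_Icc]
          constructor <;> intro <;> linarith
        · rintro r ⟨t', ht', rfl⟩
          refine ⟨g (t' + (s - t)) s, ⟨t' + (s - t), ?_, rfl⟩, ?_⟩
          · simp only [Set.mem_Icc] at ht' ⊢; constructor <;> linarith
          · have h1 := hgshift t' t (s - t)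
            have e : t + (s - t) = s := by ring
            rw [e] at h1
            have e2 : |s - t| = |t - s| := abs_sub_comm s t
            rw [e2] at h1
            linarith [(abs_le.1 h1).1]
        · rintro r ⟨t', ht', rfl⟩
          refine ⟨g (t' + (t - s)) t, ⟨t' + (t - s), ?_, rfl⟩, ?_⟩
          · simp only [Set.mem_Icc] at ht' ⊢; constructor <;> linarith
          · have h1 := hgshift t' s (t - s)
            have e : s + (t - s) = t := by ring
            rw [e] at h1
            linarith [(abs_le.1 h1).1]
  obtain ⟨hb, hl⟩ := main φ hφ
  refine ⟨hb, hl, ?_, hb, ?_⟩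
  · have : LipschitzWith M₂.toNNReal (robR x φ) := by
      refine LipschitzWith.of_dist_le_mul (fun t s => ?_)
      rw [Real.dist_eq, Real.dist_eq, Real.coe_toNNReal M₂ hM₂]
      exact hl t s
    exact this.continuous
  · intro τ hτ t
    have h1 := hl (t - τ) t
    have e : t - τ - t = -τ := by ring
    rw [e, abs_neg, abs_of_nonneg hτ] at h1
    exact h1
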